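/- Let R be a commutative noetherian local ring with maximal ideal m. Let A be an artinian R-module and let L be an m-torsion R-module (every element of L is annihilated by some power of m). Fix an integer t ≥ 0 such that m^t A = m^{t+1} A. Then len_R(A ⊗_R L) ≤ len_R(A/m^t A) · β^R_0(L) and len_R(A ⊗_R L) ≤ β^R_0(A) · len_R(L/m^t L), with the convention 0·∞ = 0. -/

import Mathlib

/-!
Every element of `L` is killed by some `m^j`, and `m^t A = m^(t+j) A ⊆ m^j A`; hence
`b ⊗ x = 0` in `A ⊗ L` whenever `b ∈ m^t A`, and likewise `y ⊗ a = 0` in `L ⊗ A` whenever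
`y ∈ m^t L`. So `A ⊗ L ≅ (A/m^t A) ⊗ L` and `A ⊗ L ≅ L ⊗ A ≅ (L/m^t L) ⊗ A`, and both bounds
reduce to `len(M ⊗ N) ≤ len(M) · len(N/mN)` for an `m`-torsion module `M`. For `M` of finite
length this follows from right exactness of `- ⊗ N` along a composition series, each simple
factor being `k` with `k ⊗ N ≅ N/mN`. If `M` has infinite length the bound is trivial unless
`N = mN`, and then `M ⊗ N = 0` because `M` is `m`-torsion.
-/

open CategoryTheory IsLocalRing TensorProduct

universe u

/-- `Ext^i_R(A, B)`, as an object of `ModuleCat R` (Mathlib's derived-functor `Ext`). -/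
noncomputable def extMod (R : Type u) [CommRing R] (i : ℕ) (A B : Type u)
    [AddCommGroup A] [Module R A] [AddCommGroup B] [Module R B] : ModuleCat.{u} R :=
  ((Ext R (ModuleCat.{u} R) i).obj (Opposite.op (ModuleCat.of R A))).obj (ModuleCat.of R B)

/-- `Tor_i^R(A, B)`, as an object of `ModuleCat R`. -/
noncomputable def torMod (R : Type u) [CommRing R] (i : ℕ) (A B : Type u)
    [AddCommGroup A] [Module R A] [AddCommGroup B] [Module R B] : ModuleCat.{u} R :=
  ((Tor (ModuleCat.{u} R) i).obj (ModuleCat.of R A)).obj (ModuleCat.of R B)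

/-- An `R`-module `M` is mini-max if it has a noetherian submodule `N` such that `M/N`
is artinian. -/
def IsMiniMax (R M : Type u) [CommRing R] [AddCommGroup M] [Module R M] : Prop :=
  ∃ N : Submodule R M, IsNoetherian R N ∧ IsArtinian R (M ⧸ N)

/-- `E` is an injective hull of the residue field `k` of the local ring `R`:
`E` is injective and is an essential extension of `k`. -/
def IsInjectiveHullOfResidueField (R E : Type u) [CommRing R] [IsLocalRing R]
    [AddCommGroup E] [Module R E] : Prop :=
  Module.Injective R E ∧
    ∃ f : ResidueField R →ₗ[R] E, Function.Injective f ∧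
      ∀ S : Submodule R E, S ≠ ⊥ → S ⊓ LinearMap.range f ≠ ⊥

/-- The Matlis biduality map `M → Hom_R(Hom_R(M, E), E)`, `x ↦ (ψ ↦ ψ x)`. -/
def matlisBidual (R M E : Type u) [CommRing R] [AddCommGroup M] [Module R M]
    [AddCommGroup E] [Module R E] : M →ₗ[R] ((M →ₗ[R] E) →ₗ[R] E) :=
  LinearMap.applyₗ

/-- `M` is Matlis reflexive (with respect to `E`): the biduality map is an isomorphism. -/
def IsMatlisReflexive (R M E : Type u) [CommRing R] [AddCommGroup M] [Module R M]
    [AddCommGroup E] [Module R E] : Prop :=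
  Function.Bijective (matlisBidual R M E)

/-- The length of an `R`-module `M`, valued in `ℕ∞`: the supremum of the lengths of
chains of submodules of `M`. -/
noncomputable def moduleLength (R M : Type u) [Semiring R] [AddCommMonoid M] [Module R M] :
    ℕ∞ :=
  WithBot.unbotD 0 (Order.krullDim (Submodule R M))

/-- `inf { i ≥ 0 | Ext^i_R(K, L) ≠ 0 }`, computed in `ℕ∞` (so it is `⊤` when all the
`Ext` modules vanish).  Taking `K = R/m` gives `depth_R(L)`; taking `K = R/a` gives
`depth_R(a; L)`. -/
noncomputable def extInf (R : Type u) [CommRing R] (K L : Type u)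
    [AddCommGroup K] [Module R K] [AddCommGroup L] [Module R L] : ℕ∞ :=
  sInf {n : ℕ∞ | ∃ i : ℕ, n = i ∧ Nontrivial (extMod R i K L)}

/-- The `m`-adic completion `R̂` of the local ring `R`. -/
abbrev Rhat (R : Type u) [CommRing R] [IsLocalRing R] : Type u :=
  AdicCompletion (maximalIdeal R) R

open Module

theorem moduleLength_eq_length (R M : Type u) [Ring R] [AddCommGroup M] [Module R M] :
    moduleLength R M = Module.length R M := by
  rw [moduleLength, ← Module.coe_length, WithBot.unbotD_coe]

theorem Submodule.pow_add_smul_eq_of_pow_smul_eq {R M : Type*} [CommRing R] [AddCommGroup M]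
    [Module R M] {I : Ideal R} {P : Submodule R M} {t : ℕ} (h : I ^ t • P = I ^ (t + 1) • P)
    (j : ℕ) : I ^ (t + j) • P = I ^ t • P := by
  induction j with
  | zero => rfl
  | succ j ih =>
    rw [← add_assoc, pow_succ, mul_comm, Submodule.mul_smul, ih, ← Submodule.mul_smul, mul_comm,
      ← pow_succ, ← h]

section Tensor

variable {R M N : Type*} [CommRing R] [AddCommGroup M] [Module R M] [AddCommGroup N]
  [Module R N]

theorem TensorProduct.tmul_eq_zero_of_mem_smul_top {I : Ideal R} {x : M}
    (hx : x ∈ I • (⊤ : Submodule R M)) {y : N} (hy : ∀ a ∈ I, ∀ x' : M, x' ⊗ₜ[R] (a • y) = 0) :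
    x ⊗ₜ[R] y = 0 :=
  (Submodule.smul_le (P := LinearMap.ker ((TensorProduct.mk R M N).flip y))).mpr
    (fun a ha x' _ => by simpa [smul_tmul] using hy a ha x') hx

theorem TensorProduct.subsingleton_of_smul_top_eq_top {I : Ideal R}
    (hM : ∀ x : M, ∃ j : ℕ, ∀ a ∈ I ^ j, a • x = 0) (hN : I • (⊤ : Submodule R N) = ⊤) :
    Subsingleton (M ⊗[R] N) := by
  have hpow (j : ℕ) : I ^ j • (⊤ : Submodule R N) = ⊤ := by
    induction j with
    | zero => simp
    | succ j ih => rw [pow_succ, Submodule.mul_smul, hN, ih]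
  refine subsingleton_of_forall_eq 0 fun z =>
    z.induction_on rfl (fun x y => ?_) fun _ _ h h' => by rw [h, h', add_zero]
  obtain ⟨j, hj⟩ := hM x
  have hker : I ^ j • (⊤ : Submodule R N) ≤ LinearMap.ker (TensorProduct.mk R M N x) :=
    Submodule.smul_le.mpr fun a ha y _ => by
      rw [LinearMap.mem_ker, mk_apply, ← smul_tmul, hj a ha, zero_tmul]
  exact hker (by rw [hpow j]; exact Submodule.mem_top)

theorem Module.length_tensor_le_add (P : Submodule R M) :
    length R (M ⊗[R] N) ≤ length R (P ⊗[R] N) + length R ((M ⧸ P) ⊗[R] N) := by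
  let f := P.subtype.rTensor N
  rw [length_eq_add_of_exact (LinearMap.range f).subtype (P.mkQ.rTensor N)
    (Submodule.subtype_injective _) (LinearMap.rTensor_surjective N P.mkQ_surjective)
    (LinearMap.exact_iff.mpr (by rw [rTensor_mkQ, Submodule.range_subtype]))]
  gcongr
  exact length_le_of_surjective f.rangeRestrict f.surjective_rangeRestrict

theorem Module.length_quotient_tensor_eq (P : Submodule R M)
    (hP : ∀ p ∈ P, ∀ n : N, p ⊗ₜ[R] n = 0) :
    length R ((M ⧸ P) ⊗[R] N) = length R (M ⊗[R] N) := by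
  have hbot : LinearMap.range (TensorProduct.map P.subtype (LinearMap.id : N →ₗ[R] N)) = ⊥ :=
    LinearMap.range_eq_bot.mpr (TensorProduct.ext' fun p n => hP p p.2 n)
  exact ((quotientTensorEquiv N P).trans (Submodule.quotEquivOfEqBot _ hbot)).length_eq

variable [IsLocalRing R]

theorem IsLocalRing.length_tensor_of_isSimpleModule [IsSimpleModule R M] :
    length R (M ⊗[R] N) = length R (N ⧸ maximalIdeal R • (⊤ : Submodule R N)) := by
  obtain ⟨I, hI, ⟨e⟩⟩ := isSimpleModule_iff_quot_maximal.mp ‹_›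
  obtain rfl := eq_maximalIdeal hI
  exact ((e.rTensor N).trans (TensorProduct.quotTensorEquivQuotSMul N _)).length_eq

theorem IsFiniteLength.length_tensor_le (hM : IsFiniteLength R M) :
    length R (M ⊗[R] N) ≤
      length R M * length R (N ⧸ maximalIdeal R • (⊤ : Submodule R N)) := by
  induction hM with
  | of_subsingleton => simp
  | @of_simple_quotient M _ _ P _ _ ih =>
    calc length R (M ⊗[R] N) ≤ length R (P ⊗[R] N) + length R ((M ⧸ P) ⊗[R] N) :=
          length_tensor_le_add P
      _ ≤ length R P * length R (N ⧸ maximalIdeal R • (⊤ : Submodule R N)) +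
            length R (N ⧸ maximalIdeal R • (⊤ : Submodule R N)) :=
          add_le_add ih (IsLocalRing.length_tensor_of_isSimpleModule).le
      _ = length R M * length R (N ⧸ maximalIdeal R • (⊤ : Submodule R N)) := by
        rw [length_eq_add_of_exact P.subtype P.mkQ P.subtype_injective P.mkQ_surjective
          (LinearMap.exact_subtype_mkQ P), length_eq_one R (M ⧸ P), add_one_mul]

theorem IsLocalRing.length_tensor_le
    (hM : ∀ x : M, ∃ j : ℕ, ∀ a ∈ maximalIdeal R ^ j, a • x = 0) :
    length R (M ⊗[R] N) ≤
      length R M * length R (N ⧸ maximalIdeal R • (⊤ : Submodule R N)) := by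
  by_cases hfin : IsFiniteLength R M
  · exact hfin.length_tensor_le
  rw [← length_ne_top_iff, not_not] at hfin
  rcases eq_or_ne (length R (N ⧸ maximalIdeal R • (⊤ : Submodule R N))) 0 with h0 | h0
  · have : Subsingleton (M ⊗[R] N) := TensorProduct.subsingleton_of_smul_top_eq_top hM
      (Submodule.Quotient.subsingleton_iff.mp (length_eq_zero_iff.mp h0))
    simp
  · rw [hfin, ENat.top_mul h0]
    exact le_top

end Tensor

/-- Let `R` be a commutative noetherian local ring with maximal ideal `m`, let `A` be an
artinian `R`-module and `L` an `m`-torsion `R`-module, and fix `t ≥ 0` with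
`m^t A = m^(t+1) A`.  Then `len_R(A ⊗_R L) ≤ len_R(A / m^t A) · β^R_0(L)` and
`len_R(A ⊗_R L) ≤ β^R_0(A) · len_R(L / m^t L)`, where `β^R_0(X) = len_R(X / m X)`
(with the convention `0 · ∞ = 0`, valid in `ℕ∞`). -/
theorem length_tensor_le
    (R : Type u) [CommRing R] [IsLocalRing R]
    (A L : Type u) [AddCommGroup A] [Module R A] [AddCommGroup L] [Module R L]
    (hL : ∀ x : L, ∃ j : ℕ, ∀ a ∈ maximalIdeal R ^ j, a • x = 0)
    (t : ℕ) (ht : maximalIdeal R ^ t • (⊤ : Submodule R A) =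
      maximalIdeal R ^ (t + 1) • (⊤ : Submodule R A)) :
    moduleLength R (A ⊗[R] L) ≤
      moduleLength R (A ⧸ (maximalIdeal R ^ t • (⊤ : Submodule R A))) *
        moduleLength R (L ⧸ (maximalIdeal R • (⊤ : Submodule R L))) ∧
    moduleLength R (A ⊗[R] L) ≤
      moduleLength R (A ⧸ (maximalIdeal R • (⊤ : Submodule R A))) *
        moduleLength R (L ⧸ (maximalIdeal R ^ t • (⊤ : Submodule R L))) := by
  simp only [moduleLength_eq_length]
  set m := maximalIdeal R
  have hA_tmul : ∀ b ∈ m ^ t • (⊤ : Submodule R A), ∀ x : L, b ⊗ₜ[R] x = 0 := by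
    intro b hb x
    obtain ⟨j, hj⟩ := hL x
    rw [← Submodule.pow_add_smul_eq_of_pow_smul_eq ht j] at hb
    exact TensorProduct.tmul_eq_zero_of_mem_smul_top
      (Submodule.pow_smul_top_le m A (Nat.le_add_left j t) hb)
      fun a ha _ => by rw [hj a ha, tmul_zero]
  have hL_tmul : ∀ y ∈ m ^ t • (⊤ : Submodule R L), ∀ a : A, y ⊗ₜ[R] a = 0 :=
    fun y hy a => TensorProduct.tmul_eq_zero_of_mem_smul_top hy fun r hr x => by
      rw [← TensorProduct.comm_tmul R A L, hA_tmul _ (Submodule.smul_mem_smul hr trivial), map_zero]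
  have hquot {M : Type u} [AddCommGroup M] [Module R M] (x : M ⧸ m ^ t • (⊤ : Submodule R M)) :
      ∃ j : ℕ, ∀ a ∈ m ^ j, a • x = 0 :=
    ⟨t, fun a ha => isTorsionBySet_quotient_ideal_smul M (m ^ t) (x := x) (a := ⟨a, ha⟩)⟩
  constructor
  · rw [← length_quotient_tensor_eq _ hA_tmul]
    exact IsLocalRing.length_tensor_le hquot
  · rw [(TensorProduct.comm R A L).length_eq, ← length_quotient_tensor_eq _ hL_tmul, mul_comm]
    exact IsLocalRing.length_tensor_le hquot
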